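/- arXiv:2207.01915 — 4 statements merged into one kernel-verified Lean document; each statement's English description precedes it below -/
import Mathlib

section
/- Let H be a complex Hilbert space and x, y, e ∈ H with ‖e‖ = 1. Then |⟨x,e⟩·⟨e,y⟩| ≤ (1/2)(‖x‖·‖y‖ + |⟨x,y⟩|) (Buzano's inequality). -/
/-!
Reflection in the line `𝕜 ∙ e` is the isometry `y ↦ 2 ⟪e, y⟫ e - y`, so by Cauchy–Schwarz
`‖2 ⟪x, e⟫ ⟪e, y⟫ - ⟪x, y⟫‖ = ‖⟪x, reflection y⟫‖ ≤ ‖x‖ ‖y‖`; the triangle inequality then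
gives Buzano's inequality.
-/

section

variable {𝕜 E : Type*} [RCLike 𝕜] [NormedAddCommGroup E] [InnerProductSpace 𝕜 E]

theorem inner_reflection_span_singleton_of_norm_eq_one {e : E} (he : ‖e‖ = 1) (x y : E) :
    inner 𝕜 x ((𝕜 ∙ e).reflection y) = 2 * (inner 𝕜 x e * inner 𝕜 e y) - inner 𝕜 x y := by
  rw [Submodule.reflection_apply, Submodule.starProjection_unit_singleton 𝕜 he, two_smul,
    inner_sub_right, inner_add_right, inner_smul_right]
  ring

theorem norm_two_mul_inner_mul_inner_sub_inner_le {e : E} (he : ‖e‖ = 1) (x y : E) :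
    ‖2 * (inner 𝕜 x e * inner 𝕜 e y) - inner 𝕜 x y‖ ≤ ‖x‖ * ‖y‖ := by
  rw [← inner_reflection_span_singleton_of_norm_eq_one he]
  simpa only [LinearIsometryEquiv.norm_map] using norm_inner_le_norm x ((𝕜 ∙ e).reflection y)

end

theorem stmt3 {H : Type*} [NormedAddCommGroup H] [InnerProductSpace ℂ H]
    (x y e : H) (he : ‖e‖ = 1) :
    ‖(inner ℂ x e : ℂ) * (inner ℂ e y : ℂ)‖ ≤ (1 / 2) * (‖x‖ * ‖y‖ + ‖(inner ℂ x y : ℂ)‖) := by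
  have htriangle : ‖2 * (inner ℂ x e * inner ℂ e y)‖
      ≤ ‖2 * (inner ℂ x e * inner ℂ e y) - inner ℂ x y‖ + ‖(inner ℂ x y : ℂ)‖ :=
    norm_le_norm_sub_add _ _
  rw [norm_mul, Complex.norm_two] at htriangle
  linarith [norm_two_mul_inner_mul_inner_sub_inner_le (𝕜 := ℂ) he x y]
end

section
/- Let A be a positive bounded operator on a complex Hilbert space H and r ≥ 1 a real number. Then for every unit vector x ∈ H, ⟨Ax,x⟩^r ≤ ⟨A^r x, x⟩ (Hölder–McCarthy inequality). -/
/-- The numerical radius of a bounded operator on a complex Hilbert space. -/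
noncomputable def numRad {H : Type*} [NormedAddCommGroup H] [InnerProductSpace ℂ H]
    (A : H →L[ℂ] H) : ℝ :=
  ⨆ x : {x : H // ‖x‖ = 1}, ‖(inner ℂ (A x.1) x.1 : ℂ)‖

/-- The modulus `|A| = (A*A)^{1/2}`, via continuous functional calculus. -/
noncomputable def absOp {H : Type*} [NormedAddCommGroup H] [InnerProductSpace ℂ H]
    [CompleteSpace H] (A : H →L[ℂ] H) : H →L[ℂ] H :=
  cfc Real.sqrt (ContinuousLinearMap.adjoint A * A)

/-!
The tangent line `t ↦ c ^ r + r c ^ (r - 1) (t - c)` of the convex function `t ↦ t ^ r` at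
`c = ⟪A x, x⟫` lies below it on `[0, ∞)`, which contains the spectrum of `A`. Monotonicity of the
functional calculus turns this into an operator inequality between `A ^ r` and an affine function
of `A`; taking the quadratic form at the unit vector `x`, the affine side becomes the tangent line
evaluated at `c`, i.e. `c ^ r`.
-/

lemma Real.rpow_add_mul_rpow_sub_one_mul_sub_le_rpow {c t r : ℝ} (hc : 0 ≤ c) (ht : 0 ≤ t)
    (hr : 1 ≤ r) : c ^ r + r * c ^ (r - 1) * (t - c) ≤ t ^ r := by
  have hr₀ : 0 < r := by linarith
  have amgm := Real.geom_mean_le_arith_mean2_weighted (inv_nonneg.2 hr₀.le)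
    (sub_nonneg.2 (inv_le_one_of_one_le₀ hr)) (Real.rpow_nonneg ht r) (Real.rpow_nonneg hc r)
    (add_sub_cancel r⁻¹ 1)
  rw [← Real.rpow_mul ht, ← Real.rpow_mul hc, mul_inv_cancel₀ hr₀.ne', Real.rpow_one,
    show r * (1 - r⁻¹) = r - 1 by field_simp] at amgm
  have hcr : c ^ (r - 1) * c = c ^ r := by
    rw [← Real.rpow_add_one' hc (by linarith), sub_add_cancel]
  calc c ^ r + r * c ^ (r - 1) * (t - c) = r * (t * c ^ (r - 1)) - (r - 1) * c ^ r := by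
        rw [← hcr]; ring
    _ ≤ r * (r⁻¹ * t ^ r + (1 - r⁻¹) * c ^ r) - (r - 1) * c ^ r := by gcongr
    _ = t ^ r := by field_simp; ring

variable {H : Type*} [NormedAddCommGroup H] [InnerProductSpace ℂ H] [CompleteSpace H]

theorem ContinuousLinearMap.add_mul_re_inner_le_re_inner_cfc {A : H →L[ℂ] H}
    (hA : IsSelfAdjoint A) {f : ℝ → ℝ} (hf : ContinuousOn f (spectrum ℝ A)) {a b : ℝ}
    (h : ∀ t ∈ spectrum ℝ A, a + b * t ≤ f t) (x : H) :
    a * ‖x‖ ^ 2 + b * (inner ℂ (A x) x).re ≤ (inner ℂ (cfc f A x) x).re := by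
  have hle : algebraMap ℝ _ a + b • A ≤ cfc f A := by
    rw [← cfc_const a A, ← cfc_const_mul_id b A, ← cfc_add _ _ _ (by fun_prop) (by fun_prop)]
    exact cfc_mono h (by fun_prop) hf
  simpa [inner_sub_left, inner_add_left, ← Complex.coe_smul, inner_smul_left,
    ← Complex.ofReal_pow] using ((le_def _ _).mp hle).re_inner_nonneg_left x

theorem stmt4 (A : H →L[ℂ] H) (hA : 0 ≤ A) (r : ℝ) (hr : 1 ≤ r)
    (x : H) (hx : ‖x‖ = 1) :
    ((inner ℂ (A x) x : ℂ).re) ^ r ≤ ((inner ℂ ((cfc (fun t : ℝ => t ^ r) A) x) x : ℂ)).re := by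
  set c := (inner ℂ (A x) x).re
  have hc : 0 ≤ c := ((ContinuousLinearMap.nonneg_iff_isPositive A).mp hA).re_inner_nonneg_left x
  have tangent_le : ∀ t ∈ spectrum ℝ A,
      (c ^ r - r * c ^ (r - 1) * c) + r * c ^ (r - 1) * t ≤ t ^ r := fun t ht ↦ by
    linarith [Real.rpow_add_mul_rpow_sub_one_mul_sub_le_rpow hc (spectrum_nonneg_of_nonneg hA ht) hr]
  have := ContinuousLinearMap.add_mul_re_inner_le_re_inner_cfc hA.isSelfAdjoint
    (Real.continuous_rpow_const (by linarith)).continuousOn tangent_le x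
  rw [hx] at this
  linarith
end

section
/- Let A be a bounded linear operator on a complex Hilbert space H, and let f, g : [0,∞) → [0,∞) be continuous functions with f(t)g(t) = t for all t ≥ 0. Then for all x, y ∈ H, |⟨Ax,y⟩| ≤ ‖f(|A|)x‖ · ‖g(|A*|)y‖ (Kittaneh's mixed Cauchy–Schwarz inequality). -/
variable {H : Type*} [NormedAddCommGroup H] [InnerProductSpace ℂ H] [CompleteSpace H]

section Intertwine

variable {R : Type*} [Ring R] [StarRing R] [Algebra ℝ R] [TopologicalSpace R]
  [IsSemitopologicalRing R] [T2Space R] [ContinuousFunctionalCalculus ℝ R IsSelfAdjoint]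

theorem SemiconjBy.cfc_real {x a b : R} (h : SemiconjBy x a b) (ha : IsSelfAdjoint a)
    (hb : IsSelfAdjoint b) (f : ℝ → ℝ) (hf : ContinuousOn f (spectrum ℝ a ∪ spectrum ℝ b)) :
    SemiconjBy x (cfc f a) (cfc f b) := by
  set s := spectrum ℝ a ∪ spectrum ℝ b
  have : CompactSpace s := isCompact_iff_compactSpace.mp
    ((ContinuousFunctionalCalculus.isCompact_spectrum a).union
      (ContinuousFunctionalCalculus.isCompact_spectrum b))
  let ιa : C(spectrum ℝ a, s) := ⟨Set.inclusion Set.subset_union_left, by fun_prop⟩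
  let ιb : C(spectrum ℝ b, s) := ⟨Set.inclusion Set.subset_union_right, by fun_prop⟩
  let φa : C(s, ℝ) →⋆ₐ[ℝ] R := (cfcHom ha).comp (ContinuousMap.compStarAlgHom' ℝ ℝ ιa)
  let φb : C(s, ℝ) →⋆ₐ[ℝ] R := (cfcHom hb).comp (ContinuousMap.compStarAlgHom' ℝ ℝ ιb)
  have hid : SemiconjBy x (φa ((ContinuousMap.id ℝ).restrict s))
      (φb ((ContinuousMap.id ℝ).restrict s)) := by
    rwa [← cfcHom_id (R := ℝ) ha, ← cfcHom_id (R := ℝ) hb] at h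
  have key : ∀ u : C(s, ℝ), SemiconjBy x (φa u) (φb u) := by
    intro u
    induction u using ContinuousMap.induction_on_of_compact with
    | const r =>
      change SemiconjBy x (φa (algebraMap ℝ _ r)) (φb (algebraMap ℝ _ r))
      rw [AlgHomClass.commutes, AlgHomClass.commutes]
      exact Algebra.commute_algebraMap_right r x
    | id => exact hid
    | star_id => simpa only [star_trivial] using hid
    | add u v hu hv => simpa only [map_add] using hu.add_right hv
    | mul u v hu hv => simpa only [map_mul] using hu.mul_right hv
    | frequently u hu =>
      have hφa : Continuous φa :=
        (cfcHom_continuous ha).comp (ContinuousMap.continuous_precomp ιa)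
      have hφb : Continuous φb :=
        (cfcHom_continuous hb).comp (ContinuousMap.continuous_precomp ιb)
      exact (isClosed_eq (hφa.const_mul x) (hφb.mul_const x)).mem_of_frequently_of_tendsto hu
        Filter.tendsto_id
  convert key ⟨s.domRestrict f, hf.domRestrict⟩ using 1
  · rw [cfc_apply f a (hf := hf.mono Set.subset_union_left)]; rfl
  · rw [cfc_apply f b (hf := hf.mono Set.subset_union_right)]; rfl

end Intertwine

open scoped InnerProductSpace

open ContinuousLinearMap in
theorem ContinuousLinearMap.norm_apply_eq_of_adjoint_comp_self_eq {𝕜 E F : Type*} [RCLike 𝕜]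
    [NormedAddCommGroup E] [InnerProductSpace 𝕜 E] [CompleteSpace E]
    [NormedAddCommGroup F] [InnerProductSpace 𝕜 F] [CompleteSpace F] {A B : E →L[𝕜] F}
    (h : adjoint A ∘L A = adjoint B ∘L B) (x : E) : ‖A x‖ = ‖B x‖ := by
  have hsq := apply_norm_sq_eq_inner_adjoint_left A x
  rw [h, ← apply_norm_sq_eq_inner_adjoint_left] at hsq
  exact (pow_left_inj₀ (norm_nonneg _) (norm_nonneg _) two_ne_zero).mp hsq

theorem norm_cfc_sqrt_star_mul_self_apply (A : H →L[ℂ] H) (x : H) :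
    ‖cfc Real.sqrt (star A * A) x‖ = ‖A x‖ := by
  refine ContinuousLinearMap.norm_apply_eq_of_adjoint_comp_self_eq ?_ x
  change star (cfc Real.sqrt (star A * A)) * cfc Real.sqrt (star A * A) = star A * A
  rw [← cfc_star, ← cfc_mul ..]
  refine (cfc_congr fun t ht => ?_).trans (cfc_id' ℝ (star A * A))
  exact Real.mul_self_sqrt (spectrum_nonneg_of_nonneg (star_mul_self_nonneg A) ht)

theorem Real.sqrt_mul_div_add_le {t ε : ℝ} (ht : 0 ≤ t) (hε : 0 < ε) :
    √t * (ε / (t + ε)) ≤ √ε := by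
  rw [mul_div_assoc', div_le_iff₀ (by positivity)]
  have hs := Real.sqrt_nonneg t
  have he := Real.sqrt_nonneg ε
  nlinarith [Real.sq_sqrt ht, Real.sq_sqrt hε.le, mul_nonneg he (sq_nonneg (√t - √ε)),
    mul_nonneg (mul_nonneg he hs) he]

section Regularization

/- The regularizers are written with `|t|` so that they are continuous on all of `ℝ`; on the
spectrum of `A⋆A` or `AA⋆`, where they are evaluated, `|t| = t`. -/

variable (A : H →L[ℂ] H) {ε : ℝ} (hε : 0 < ε)
include hε

theorem norm_apply_cfc_div_abs_add_le (x : H) :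
    ‖A (cfc (fun t => ε / (|t| + ε)) (star A * A) x)‖ ≤ √ε * ‖x‖ := by
  have hr : Continuous fun t : ℝ => ε / (|t| + ε) := by fun_prop (disch := intro; positivity)
  rw [← norm_cfc_sqrt_star_mul_self_apply, ← mul_apply_eq_comp,
    ← cfc_mul _ _ _ (hg := hr.continuousOn)]
  refine (ContinuousLinearMap.le_opNorm _ _).trans
    (mul_le_mul_of_nonneg_right (norm_cfc_le (Real.sqrt_nonneg ε) fun t ht => ?_) (norm_nonneg x))
  have ht : 0 ≤ t := spectrum_nonneg_of_nonneg (star_mul_self_nonneg A) ht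
  rw [abs_of_nonneg ht, Real.norm_of_nonneg (by positivity)]
  exact Real.sqrt_mul_div_add_le ht hε

theorem norm_inner_apply_cfc_div_abs_add_le {F G : ℝ → ℝ} (hF : Continuous F)
    (hG : Continuous G) (hFG : ∀ t, 0 ≤ t → F t * G t = √t) (x y : H) :
    ‖⟪A (cfc (fun t => |t| / (|t| + ε)) (star A * A) x), y⟫_ℂ‖ ≤
      ‖cfc F (star A * A) x‖ * ‖cfc G (A * star A) y‖ := by
  set P := star A * A
  set Q := A * star A
  set m : ℝ → ℝ := fun t => |t| / (|t| + ε)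
  set k : ℝ → ℝ := fun t => G t * √t / (|t| + ε)
  have hm : Continuous m := by fun_prop (disch := intro; positivity)
  have hk : Continuous k := by fun_prop (disch := intro; positivity)
  have hP : ∀ t ∈ spectrum ℝ P, 0 ≤ t := fun t ht =>
    spectrum_nonneg_of_nonneg (star_mul_self_nonneg A) ht
  have hQ : ∀ t ∈ spectrum ℝ Q, 0 ≤ t := fun t ht =>
    spectrum_nonneg_of_nonneg (mul_star_self_nonneg A) ht
  have hmP : cfc m P = cfc k P * cfc F P := by
    rw [← cfc_mul ..]
    refine cfc_congr fun t ht => ?_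
    simp only [m, k, abs_of_nonneg (hP t ht)]
    rw [mul_comm, ← mul_div_assoc, ← mul_assoc, hFG t (hP t ht), Real.mul_self_sqrt (hP t ht)]
  have hkQ : cfc Real.sqrt Q * cfc k Q = cfc m Q * cfc G Q := by
    rw [← cfc_mul .., ← cfc_mul ..]
    refine cfc_congr fun t ht => ?_
    simp only [m, k, abs_of_nonneg (hQ t ht)]
    rw [mul_div_assoc', mul_left_comm, Real.mul_self_sqrt (hQ t ht)]
    ring
  have hAk : A * cfc k P = cfc k Q * A :=
    SemiconjBy.cfc_real (mul_assoc A (star A) A).symm (.star_mul_self A) (.mul_star_self A) k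
      hk.continuousOn
  have hm1 : ‖cfc m Q‖ ≤ 1 := norm_cfc_le zero_le_one fun t _ => by
    rw [Real.norm_of_nonneg (by positivity), div_le_one (by positivity)]
    linarith
  calc ‖⟪A (cfc m P x), y⟫_ℂ‖
      = ‖⟪cfc F P x, star A (cfc k Q y)⟫_ℂ‖ := by
        rw [← mul_apply_eq_comp A, hmP, ← mul_assoc, hAk]
        simp only [mul_apply_eq_comp]
        rw [show ⟪cfc k Q (A (cfc F P x)), y⟫_ℂ = ⟪A (cfc F P x), cfc k Q y⟫_ℂ from
          (cfc_predicate k Q).isSymmetric _ _, ← ContinuousLinearMap.adjoint_inner_right]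
        rfl
    _ ≤ ‖cfc F P x‖ * ‖cfc m Q (cfc G Q y)‖ := by
        refine (norm_inner_le_norm _ _).trans_eq ?_
        rw [← norm_cfc_sqrt_star_mul_self_apply (star A), star_star, ← mul_apply_eq_comp, hkQ,
          mul_apply_eq_comp]
    _ ≤ ‖cfc F P x‖ * ‖cfc G Q y‖ := by
        gcongr
        exact (ContinuousLinearMap.le_opNorm _ _).trans (mul_le_of_le_one_left (norm_nonneg _) hm1)

theorem norm_inner_le_norm_cfc_mul_norm_cfc_add {F G : ℝ → ℝ} (hF : Continuous F)
    (hG : Continuous G) (hFG : ∀ t, 0 ≤ t → F t * G t = √t) (x y : H) :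
    ‖⟪A x, y⟫_ℂ‖ ≤ ‖cfc F (star A * A) x‖ * ‖cfc G (A * star A) y‖ + √ε * (‖x‖ * ‖y‖) := by
  set P := star A * A
  have hsplit : cfc (fun t => |t| / (|t| + ε)) P + cfc (fun t => ε / (|t| + ε)) P = 1 := by
    rw [← cfc_add _ _ _ (by fun_prop (disch := intros; positivity))
      (by fun_prop (disch := intros; positivity)), ← cfc_one ℝ P]
    exact cfc_congr fun t _ => by rw [← add_div, Pi.one_apply, div_self (by positivity)]
  calc ‖⟪A x, y⟫_ℂ‖
      = ‖⟪A (cfc (fun t => |t| / (|t| + ε)) P x), y⟫_ℂ +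
          ⟪A (cfc (fun t => ε / (|t| + ε)) P x), y⟫_ℂ‖ := by
        rw [← inner_add_left, ← map_add, ← add_apply, hsplit, one_apply_eq_self]
    _ ≤ ‖cfc F P x‖ * ‖cfc G (A * star A) y‖ + √ε * ‖x‖ * ‖y‖ := by
        refine (norm_add_le _ _).trans (add_le_add
          (norm_inner_apply_cfc_div_abs_add_le A hε hF hG hFG x y) ?_)
        exact (norm_inner_le_norm _ _).trans
          (by gcongr; exact norm_apply_cfc_div_abs_add_le A hε x)
    _ = _ := by ring

end Regularization

open Filter Topology in
theorem norm_inner_le_norm_cfc_mul_norm_cfc (A : H →L[ℂ] H) {F G : ℝ → ℝ} (hF : Continuous F)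
    (hG : Continuous G) (hFG : ∀ t, 0 ≤ t → F t * G t = √t) (x y : H) :
    ‖⟪A x, y⟫_ℂ‖ ≤ ‖cfc F (star A * A) x‖ * ‖cfc G (A * star A) y‖ := by
  have hlim : Tendsto (fun ε => ‖cfc F (star A * A) x‖ * ‖cfc G (A * star A) y‖ +
      √ε * (‖x‖ * ‖y‖)) (𝓝[>] 0) (𝓝 (‖cfc F (star A * A) x‖ * ‖cfc G (A * star A) y‖)) := by
    simpa using (((Real.continuous_sqrt.tendsto 0).mono_left nhdsWithin_le_nhds).mul_const
      (‖x‖ * ‖y‖)).const_add (‖cfc F (star A * A) x‖ * ‖cfc G (A * star A) y‖)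
  refine ge_of_tendsto hlim ?_
  filter_upwards [self_mem_nhdsWithin] with ε hε
  exact norm_inner_le_norm_cfc_mul_norm_cfc_add A hε hF hG hFG x y

theorem cfc_absOp {h : ℝ → ℝ} (hh : ContinuousOn h (Set.Ici 0)) (B : H →L[ℂ] H) :
    cfc h (absOp B) = cfc (fun t => h √t) (star B * B) :=
  (cfc_comp' h Real.sqrt (star B * B)
    (hh.mono (Set.image_subset_iff.mpr fun t _ => Real.sqrt_nonneg t))).symm

theorem stmt6_general (A : H →L[ℂ] H) (f g : ℝ → ℝ)
    (hfc : ContinuousOn f (Set.Ici 0)) (hgc : ContinuousOn g (Set.Ici 0))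
    (hfg : ∀ t : ℝ, 0 ≤ t → f t * g t = t) (x y : H) :
    ‖(inner ℂ (A x) y : ℂ)‖ ≤
      ‖(cfc f (absOp A)) x‖ * ‖(cfc g (absOp (ContinuousLinearMap.adjoint A))) y‖ := by
  have hcont {h : ℝ → ℝ} (hh : ContinuousOn h (Set.Ici 0)) : Continuous fun t => h √t :=
    hh.comp_continuous Real.continuous_sqrt Real.sqrt_nonneg
  rw [cfc_absOp hfc, cfc_absOp hgc, ← ContinuousLinearMap.star_eq_adjoint, star_star]
  exact norm_inner_le_norm_cfc_mul_norm_cfc A (hcont hfc) (hcont hgc)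
    (fun t _ => hfg √t (Real.sqrt_nonneg t)) x y

theorem stmt6 (A : H →L[ℂ] H) (f g : ℝ → ℝ)
    (hfc : ContinuousOn f (Set.Ici 0)) (hgc : ContinuousOn g (Set.Ici 0))
    (hf0 : ∀ t : ℝ, 0 ≤ t → 0 ≤ f t) (hg0 : ∀ t : ℝ, 0 ≤ t → 0 ≤ g t)
    (hfg : ∀ t : ℝ, 0 ≤ t → f t * g t = t) (x y : H) :
    ‖(inner ℂ (A x) y : ℂ)‖ ≤
      ‖(cfc f (absOp A)) x‖ * ‖(cfc g (absOp (ContinuousLinearMap.adjoint A))) y‖ :=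
  stmt6_general A f g hfc hgc hfg x y
end

section
/- Let A ∈ B(H) and let φ, ψ be mutually complementary Orlicz functions (i.e., uv ≤ φ(u)+ψ(v) for all u,v ≥ 0). Then w(A)² ≤ ‖φ(|A|) + ψ(|A*|)‖, where w denotes the numerical radius. -/
/-!
For a unit vector `x`, the mixed Schwarz inequality `|⟪Ax, x⟫|² ≤ ⟪|A|x, x⟫ ⟪|A*|x, x⟫`, Young's
inequality and Jensen's inequality `φ ⟪Tx, x⟫ ≤ ⟪φ(T)x, x⟫` (for `T ≥ 0`) give
`|⟪Ax, x⟫|² ≤ ⟪φ(|A|)x, x⟫ + ⟪ψ(|A*|)x, x⟫ ≤ ‖φ(|A|) + ψ(|A*|)‖`. Jensen holds because a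
supporting line of `φ` at `⟪Tx, x⟫` lies below `φ` on the spectrum of `T`; at the endpoint `0`,
monotonicity of `φ` provides the horizontal one.

Mixed Schwarz is proved without a polar decomposition: with `P = (|A| + ε)^{1/2}` and `Q = P⁻¹`,
Cauchy–Schwarz for `⟪Ax, x⟫ = ⟪Px, QA*x⟫` gives `⟪(|A| + ε)x, x⟫ ⟪AQ²A*x, x⟫`, and
`AQ²A* ≤ |A*|` because `(AQ²A*)² = A (Q²|A|²Q²) A* ≤ AA*` and the square root is operator
monotone. Then let `ε → 0`.
-/

/-- An Orlicz function: convex, continuous, non-decreasing on `[0, ∞)`,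
vanishing at `0`, positive on `(0, ∞)`, and tending to infinity. -/
def IsOrliczFunction (φ : ℝ → ℝ) : Prop :=
  ConvexOn ℝ (Set.Ici 0) φ ∧ ContinuousOn φ (Set.Ici 0) ∧ MonotoneOn φ (Set.Ici 0) ∧
    φ 0 = 0 ∧ (∀ u : ℝ, 0 < u → 0 < φ u) ∧ Filter.Tendsto φ Filter.atTop Filter.atTop

variable {H : Type*} [NormedAddCommGroup H] [InnerProductSpace ℂ H] [CompleteSpace H]

open Set Filter Topology RCLike
open scoped InnerProductSpace

namespace ConvexOn

variable {S : Set ℝ} {f : ℝ → ℝ} {s t : ℝ}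

lemma add_rightDeriv_mul_sub_le (hf : ConvexOn ℝ S f) (hs : s ∈ interior S) (ht : t ∈ S) :
    f s + derivWithin f (Ioi s) s * (t - s) ≤ f t := by
  rcases lt_trichotomy t s with hts | rfl | hst
  · have h := (hf.slope_le_leftDeriv_of_mem_interior ht hs hts).trans
      (hf.leftDeriv_le_rightDeriv_of_mem_interior hs)
    rw [slope_def_field, div_le_iff₀ (sub_pos.mpr hts)] at h
    linarith
  · simp
  · have h := hf.rightDeriv_le_slope_of_mem_interior hs ht hst
    rw [slope_def_field, le_div_iff₀ (sub_pos.mpr hst)] at h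
    linarith

lemma exists_forall_add_mul_sub_le_of_monotoneOn (hf : ConvexOn ℝ (Ici 0) f)
    (hmono : MonotoneOn f (Ici 0)) (hs : 0 ≤ s) :
    ∃ c, ∀ t, 0 ≤ t → f s + c * (t - s) ≤ f t := by
  rcases hs.eq_or_lt with rfl | hs
  · exact ⟨0, fun t ht => by simpa using hmono self_mem_Ici ht ht⟩
  · refine ⟨_, fun t ht => hf.add_rightDeriv_mul_sub_le ?_ ht⟩
    rwa [interior_Ici]

end ConvexOn

section CStarAlgebra

variable {A : Type*} [CStarAlgebra A] [PartialOrder A] [StarOrderedRing A]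

lemma mul_mul_star_le_abs_star {a g : A} (hg : 0 ≤ g) (hgag : g * (star a * a) * g ≤ 1) :
    a * g * star a ≤ CFC.abs (star a) := by
  have hsq : (a * g * star a) * (a * g * star a) ≤ a * star a :=
    calc (a * g * star a) * (a * g * star a) = a * (g * (star a * a) * g) * star a := by
          simp only [mul_assoc]
      _ ≤ a * 1 * star a := star_right_conjugate_le_conjugate hgag a
      _ = a * star a := by rw [mul_one]
  calc a * g * star a = CFC.sqrt ((a * g * star a) * (a * g * star a)) :=
        (CFC.sqrt_mul_self _ (star_right_conjugate_nonneg hg a)).symm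
    _ ≤ CFC.sqrt (a * star a) := CFC.sqrt_le_sqrt _ _ hsq
    _ = CFC.abs (star a) := by rw [CFC.abs, star_star]

lemma mul_cfc_inv_sqrt_add_mul_star_le_abs_star (a : A) {ε : ℝ} (hε : 0 < ε) :
    a * cfc (fun t => (√t + ε)⁻¹) (star a * a) * star a ≤ CFC.abs (star a) := by
  set b := star a * a
  set g : ℝ → ℝ := fun t => (√t + ε)⁻¹
  have hg_cont : Continuous g := Continuous.inv₀ (by fun_prop) fun t => by positivity
  refine mul_mul_star_le_abs_star (cfc_nonneg fun t _ => by positivity) ?_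
  change cfc g b * b * cfc g b ≤ 1
  nth_rewrite 2 [← cfc_id' ℝ b]
  rw [← cfc_mul g (fun t => t) b hg_cont.continuousOn (continuousOn_id' _),
    ← cfc_mul _ g b (by fun_prop) hg_cont.continuousOn]
  refine cfc_le_one _ b fun t ht => ?_
  have hsq := Real.sq_sqrt (spectrum_nonneg_of_nonneg (star_mul_self_nonneg a) ht)
  simp only [g]
  rw [mul_inv_le_iff₀ (by positivity), one_mul, inv_mul_le_iff₀ (by positivity)]
  nlinarith [Real.sqrt_nonneg t]

end CStarAlgebra

section InnerProductSpace

variable {E : Type*} [NormedAddCommGroup E] [InnerProductSpace ℂ E]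

lemma numRad_sq_le {A : E →L[ℂ] E} {K : ℝ} (hK : 0 ≤ K)
    (h : ∀ x : E, ‖x‖ = 1 → ‖⟪A x, x⟫_ℂ‖ ^ 2 ≤ K) : numRad A ^ 2 ≤ K := by
  have hle : numRad A ≤ √K :=
    Real.iSup_le (fun x => Real.le_sqrt_of_sq_le (h x.1 x.2)) (Real.sqrt_nonneg K)
  calc numRad A ^ 2 ≤ √K ^ 2 :=
        pow_le_pow_left₀ (Real.iSup_nonneg fun _ => norm_nonneg _) hle 2
    _ = K := Real.sq_sqrt hK

lemma re_inner_nonneg_of_nonneg {T : E →L[ℂ] E} (h : 0 ≤ T) (x : E) : 0 ≤ re ⟪T x, x⟫_ℂ :=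
  ((ContinuousLinearMap.nonneg_iff_isPositive T).mp h).re_inner_nonneg_left x

lemma re_inner_le_re_inner_of_le {S T : E →L[ℂ] E} (h : S ≤ T) (x : E) :
    re ⟪S x, x⟫_ℂ ≤ re ⟪T x, x⟫_ℂ := by
  have := ((ContinuousLinearMap.le_def S T).mp h).re_inner_nonneg_left x
  rw [sub_apply, inner_sub_left, map_sub] at this
  linarith

lemma re_inner_add_algebraMap_apply (T : E →L[ℂ] E) (α : ℝ) (x : E) :
    re ⟪(T + algebraMap ℝ (E →L[ℂ] E) α) x, x⟫_ℂ = re ⟪T x, x⟫_ℂ + α * ‖x‖ ^ 2 := by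
  simp [Algebra.algebraMap_eq_smul_one, ← Complex.ofReal_pow]

end InnerProductSpace

lemma absOp_eq_abs (A : H →L[ℂ] H) : absOp A = CFC.abs A := by
  rw [absOp, CFC.abs, CFC.sqrt_eq_real_sqrt _ (star_mul_self_nonneg A),
    cfcₙ_eq_cfc (hf0 := Real.sqrt_zero), ContinuousLinearMap.star_eq_adjoint]

lemma absOp_nonneg (A : H →L[ℂ] H) : 0 ≤ absOp A := by
  rw [absOp_eq_abs]
  exact CFC.abs_nonneg A

lemma norm_apply_sq_eq_re_inner_star_mul_self (T : H →L[ℂ] H) (x : H) :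
    ‖T x‖ ^ 2 = re ⟪(star T * T) x, x⟫_ℂ :=
  T.apply_norm_sq_eq_inner_adjoint_left x

lemma ConvexOn.map_re_inner_le_re_inner_cfc {T : H →L[ℂ] H} (hT : 0 ≤ T) {φ : ℝ → ℝ}
    (hconv : ConvexOn ℝ (Ici 0) φ) (hcont : ContinuousOn φ (Ici 0))
    (hmono : MonotoneOn φ (Ici 0)) {x : H} (hx : ‖x‖ = 1) :
    φ (re ⟪T x, x⟫_ℂ) ≤ re ⟪cfc φ T x, x⟫_ℂ := by
  set s := re ⟪T x, x⟫_ℂ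
  have hspec : spectrum ℝ T ⊆ Ici 0 := fun t ht => spectrum_nonneg_of_nonneg hT ht
  obtain ⟨c, hc⟩ :=
    hconv.exists_forall_add_mul_sub_le_of_monotoneOn hmono (re_inner_nonneg_of_nonneg hT x)
  have hline : cfc (fun t => c * t + (φ s - c * s)) T ≤ cfc φ T :=
    cfc_mono (fun t ht => by linarith [hc t (hspec ht)]) (by fun_prop) (hcont.mono hspec)
  rw [cfc_add_const _ _ T, cfc_const_mul_id c T] at hline
  have := re_inner_le_re_inner_of_le hline x
  rw [re_inner_add_algebraMap_apply, hx, smul_apply,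
    real_smul_eq_coe_smul (K := ℂ), inner_smul_left, conj_ofReal, re_ofReal_mul] at this
  linarith

lemma norm_inner_apply_self_sq_le_of_mul_eq_one (A : H →L[ℂ] H) {P Q : H →L[ℂ] H}
    (hQP : Q * P = 1) (x : H) :
    ‖⟪A x, x⟫_ℂ‖ ^ 2 ≤ re ⟪(star P * P) x, x⟫_ℂ * re ⟪(A * (Q * star Q) * star A) x, x⟫_ℂ := by
  have hsplit : ⟪A x, x⟫_ℂ = ⟪P x, (star Q * star A) x⟫_ℂ := by
    conv_lhs => rw [← mul_one A, ← hQP]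
    simp only [ContinuousLinearMap.star_eq_adjoint, mul_apply_eq_comp,
      ContinuousLinearMap.adjoint_inner_right]
  have hQA : A * (Q * star Q) * star A = star (star Q * star A) * (star Q * star A) := by
    simp only [star_mul, star_star, mul_assoc]
  rw [hsplit, hQA, ← norm_apply_sq_eq_re_inner_star_mul_self,
    ← norm_apply_sq_eq_re_inner_star_mul_self, ← mul_pow]
  exact pow_le_pow_left₀ (norm_nonneg _) (norm_inner_le_norm _ _) 2

lemma norm_inner_apply_self_sq_le_absOp_add (A : H →L[ℂ] H) (x : H) {ε : ℝ} (hε : 0 < ε) :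
    ‖⟪A x, x⟫_ℂ‖ ^ 2 ≤
      (re ⟪absOp A x, x⟫_ℂ + ε * ‖x‖ ^ 2) * re ⟪absOp (ContinuousLinearMap.adjoint A) x, x⟫_ℂ := by
  set b := star A * A
  set p : ℝ → ℝ := fun t => √(√t + ε)
  have hp_pos : ∀ t, 0 < p t := fun t => Real.sqrt_pos.mpr (by positivity)
  have hp_cont : Continuous p := by fun_prop
  have hpinv_cont : Continuous p⁻¹ := hp_cont.inv₀ fun t => (hp_pos t).ne'
  set P := cfc p b
  set Q := cfc p⁻¹ b
  have hQP : Q * P = 1 := by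
    rw [← cfc_mul _ _ b]
    exact (cfc_congr fun t _ => inv_mul_cancel₀ (hp_pos t).ne').trans (cfc_const_one ℝ b)
  have hPP : star P * P = absOp A + algebraMap ℝ _ ε := by
    rw [(cfc_predicate p b).star_eq, ← cfc_mul _ _ b, absOp, ← ContinuousLinearMap.star_eq_adjoint,
      ← cfc_add_const ε _ b]
    exact cfc_congr fun t _ => Real.mul_self_sqrt (by positivity)
  have hQQ : Q * star Q = cfc (fun t => (√t + ε)⁻¹) b := by
    rw [(cfc_predicate p⁻¹ b).star_eq, ← cfc_mul _ _ b]
    refine cfc_congr fun t _ => ?_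
    simp only [p, Pi.inv_apply, ← mul_inv, Real.mul_self_sqrt (by positivity : 0 ≤ √t + ε)]
  have hconj : A * (Q * star Q) * star A ≤ CFC.abs (star A) :=
    hQQ ▸ mul_cfc_inv_sqrt_add_mul_star_le_abs_star A hε
  have hP_nonneg : 0 ≤ re ⟪(star P * P) x, x⟫_ℂ :=
    re_inner_nonneg_of_nonneg (star_mul_self_nonneg P) x
  calc ‖⟪A x, x⟫_ℂ‖ ^ 2
      ≤ re ⟪(star P * P) x, x⟫_ℂ * re ⟪(A * (Q * star Q) * star A) x, x⟫_ℂ :=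
        norm_inner_apply_self_sq_le_of_mul_eq_one A hQP x
    _ ≤ re ⟪(star P * P) x, x⟫_ℂ * re ⟪CFC.abs (star A) x, x⟫_ℂ :=
        mul_le_mul_of_nonneg_left (re_inner_le_re_inner_of_le hconj x) hP_nonneg
    _ = (re ⟪absOp A x, x⟫_ℂ + ε * ‖x‖ ^ 2) *
          re ⟪absOp (ContinuousLinearMap.adjoint A) x, x⟫_ℂ := by
        rw [hPP, re_inner_add_algebraMap_apply, absOp_eq_abs (ContinuousLinearMap.adjoint A),
          ContinuousLinearMap.star_eq_adjoint]

lemma norm_inner_apply_self_sq_le_absOp (A : H →L[ℂ] H) (x : H) :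
    ‖⟪A x, x⟫_ℂ‖ ^ 2 ≤
      re ⟪absOp A x, x⟫_ℂ * re ⟪absOp (ContinuousLinearMap.adjoint A) x, x⟫_ℂ := by
  set r₁ := re ⟪absOp A x, x⟫_ℂ
  set r₂ := re ⟪absOp (ContinuousLinearMap.adjoint A) x, x⟫_ℂ
  have hlim : Tendsto (fun ε => (r₁ + ε * ‖x‖ ^ 2) * r₂) (𝓝[>] 0) (𝓝 (r₁ * r₂)) := by
    have hcont : Continuous fun ε => (r₁ + ε * ‖x‖ ^ 2) * r₂ := by fun_prop
    simpa using (hcont.tendsto 0).mono_left nhdsWithin_le_nhds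
  exact ge_of_tendsto hlim (eventually_nhdsWithin_of_forall fun ε hε =>
    norm_inner_apply_self_sq_le_absOp_add A x hε)

theorem stmt8 (φ ψ : ℝ → ℝ) (hφ : IsOrliczFunction φ) (hψ : IsOrliczFunction ψ)
    (hyoung : ∀ u v : ℝ, 0 ≤ u → 0 ≤ v → u * v ≤ φ u + ψ v) (A : H →L[ℂ] H) :
    numRad A ^ 2 ≤ ‖cfc φ (absOp A) + cfc ψ (absOp (ContinuousLinearMap.adjoint A))‖ := by
  obtain ⟨hφ_conv, hφ_cont, hφ_mono, -⟩ := hφ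
  obtain ⟨hψ_conv, hψ_cont, hψ_mono, -⟩ := hψ
  set A' := ContinuousLinearMap.adjoint A
  set S := cfc φ (absOp A) + cfc ψ (absOp A')
  refine numRad_sq_le (norm_nonneg S) fun x hx => ?_
  calc ‖⟪A x, x⟫_ℂ‖ ^ 2 ≤ re ⟪absOp A x, x⟫_ℂ * re ⟪absOp A' x, x⟫_ℂ :=
        norm_inner_apply_self_sq_le_absOp A x
    _ ≤ φ (re ⟪absOp A x, x⟫_ℂ) + ψ (re ⟪absOp A' x, x⟫_ℂ) :=
        hyoung _ _ (re_inner_nonneg_of_nonneg (absOp_nonneg A) x)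
          (re_inner_nonneg_of_nonneg (absOp_nonneg A') x)
    _ ≤ re ⟪cfc φ (absOp A) x, x⟫_ℂ + re ⟪cfc ψ (absOp A') x, x⟫_ℂ :=
        add_le_add (hφ_conv.map_re_inner_le_re_inner_cfc (absOp_nonneg A) hφ_cont hφ_mono hx)
          (hψ_conv.map_re_inner_le_re_inner_cfc (absOp_nonneg A') hψ_cont hψ_mono hx)
    _ = re ⟪S x, x⟫_ℂ := by
        rw [add_apply, inner_add_left, map_add]
    _ ≤ ‖S x‖ * ‖x‖ := re_inner_le_norm _ _
    _ ≤ ‖S‖ := by simpa [hx] using S.le_opNorm x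
end
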